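/- arXiv:2110.06169 — 2 statements merged into one kernel-verified Lean document; each statement's English description precedes it below -/
import Mathlib

section
/- Let A be a finite nonempty set, w : A → ℝ weights with w(a) ≥ 0 for all a and Σ_a w(a) = 1, f : A → ℝ, and τ ∈ (0,1). Then there exists a unique real number m such that τ·Σ_a w(a)·max(f(a) − m, 0) = (1 − τ)·Σ_a w(a)·max(m − f(a), 0), and this m is the unique minimizer over ℝ of the weighted asymmetric loss m ↦ Σ_a w(a)·|τ − 𝟙(f(a) − m < 0)|·(f(a) − m)². -/
open Finset

lemma expectile_pt (τ : ℝ) (hτ : τ ∈ Set.Ioo (0 : ℝ) 1) (x y : ℝ) :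
    |τ - (if x < 0 then 1 else 0)| * x ^ 2
      + 2 * (τ * max x 0 - (1 - τ) * max (-x) 0) * (y - x)
      + min τ (1 - τ) * (y - x) ^ 2
      ≤ |τ - (if y < 0 then 1 else 0)| * y ^ 2 := by
  obtain ⟨h0, h1⟩ := hτ
  have ha : min τ (1 - τ) ≤ τ := min_le_left _ _
  have hb : min τ (1 - τ) ≤ 1 - τ := min_le_right _ _
  rcases lt_or_ge x 0 with hx | hx <;> rcases lt_or_ge y 0 with hy | hy
  · rw [if_pos hx, if_pos hy, abs_of_nonpos (by linarith), max_eq_right hx.le,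
      max_eq_left (by linarith)]
    nlinarith [sq_nonneg (y - x)]
  · rw [if_pos hx, if_neg (not_lt.mpr hy), sub_zero, abs_of_nonpos (by linarith),
      abs_of_nonneg h0.le, max_eq_right hx.le, max_eq_left (by linarith)]
    nlinarith [mul_nonneg hy (neg_nonneg.mpr hx.le)]
  · rw [if_neg (not_lt.mpr hx), if_pos hy, sub_zero, abs_of_nonneg h0.le,
      abs_of_nonpos (by linarith), max_eq_left hx, max_eq_right (by linarith)]
    nlinarith [mul_nonneg hx (neg_nonneg.mpr hy.le)]
  · rw [if_neg (not_lt.mpr hx), if_neg (not_lt.mpr hy), sub_zero, abs_of_nonneg h0.le,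
      max_eq_left hx, max_eq_right (by linarith)]
    nlinarith [sq_nonneg (y - x)]

/-- `m` is the `τ`-expectile of the values `f` under the weights `w`. -/
def IsExpectile {A : Type*} [Fintype A] (τ : ℝ) (w f : A → ℝ) (m : ℝ) : Prop :=
  τ * ∑ a, w a * max (f a - m) 0 = (1 - τ) * ∑ a, w a * max (m - f a) 0

lemma expectile_key {A : Type*} [Fintype A]
    (w : A → ℝ) (hw : ∀ a, 0 ≤ w a) (hsum : ∑ a, w a = 1)
    (f : A → ℝ) (τ : ℝ) (hτ : τ ∈ Set.Ioo (0 : ℝ) 1)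
    (m : ℝ) (hm : IsExpectile τ w f m) (m' : ℝ) :
    (∑ a, w a * (|τ - (if f a - m < 0 then 1 else 0)| * (f a - m) ^ 2))
      + min τ (1 - τ) * (m - m') ^ 2
      ≤ ∑ a, w a * (|τ - (if f a - m' < 0 then 1 else 0)| * (f a - m') ^ 2) := by
  have step : ∀ a ∈ (univ : Finset A),
      w a * (|τ - (if f a - m < 0 then 1 else 0)| * (f a - m) ^ 2
        + 2 * (τ * max (f a - m) 0 - (1 - τ) * max (-(f a - m)) 0)
            * ((f a - m') - (f a - m))
        + min τ (1 - τ) * ((f a - m') - (f a - m)) ^ 2)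
      ≤ w a * (|τ - (if f a - m' < 0 then 1 else 0)| * (f a - m') ^ 2) :=
    fun a _ => mul_le_mul_of_nonneg_left (expectile_pt τ hτ _ _) (hw a)
  have hsumle := Finset.sum_le_sum step
  have expand : ∑ a, w a * (|τ - (if f a - m < 0 then 1 else 0)| * (f a - m) ^ 2
        + 2 * (τ * max (f a - m) 0 - (1 - τ) * max (-(f a - m)) 0)
            * ((f a - m') - (f a - m))
        + min τ (1 - τ) * ((f a - m') - (f a - m)) ^ 2)
      = (∑ a, w a * (|τ - (if f a - m < 0 then 1 else 0)| * (f a - m) ^ 2))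
        + (2 * (m - m')) * (τ * ∑ a, w a * max (f a - m) 0
            - (1 - τ) * ∑ a, w a * max (m - f a) 0)
        + (min τ (1 - τ) * (m - m') ^ 2) * ∑ a, w a := by
    have h : ∀ a : A, w a * (|τ - (if f a - m < 0 then 1 else 0)| * (f a - m) ^ 2
        + 2 * (τ * max (f a - m) 0 - (1 - τ) * max (-(f a - m)) 0)
            * ((f a - m') - (f a - m))
        + min τ (1 - τ) * ((f a - m') - (f a - m)) ^ 2)
      = w a * (|τ - (if f a - m < 0 then 1 else 0)| * (f a - m) ^ 2)
        + (2 * (m - m')) * (τ * (w a * max (f a - m) 0)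
            - (1 - τ) * (w a * max (m - f a) 0))
        + (min τ (1 - τ) * (m - m') ^ 2) * w a := fun a => by
      rw [neg_sub]; ring
    rw [Finset.sum_congr rfl fun a _ => h a, Finset.sum_add_distrib,
      Finset.sum_add_distrib, ← Finset.mul_sum, ← Finset.mul_sum,
      Finset.sum_sub_distrib, ← Finset.mul_sum, ← Finset.mul_sum]
  rw [expand, hm, sub_self, mul_zero, add_zero, hsum, mul_one] at hsumle
  exact hsumle

/-- For a finite nonempty `A`, nonnegative weights summing to 1, values
`f : A → ℝ`, and `τ ∈ (0,1)`, there is a unique `m` with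
`τ·Σ w(a)·max(f(a) − m, 0) = (1 − τ)·Σ w(a)·max(m − f(a), 0)`, and this `m` is the
unique minimizer of the weighted asymmetric squared loss. -/
theorem finite_expectile_exists_unique_and_minimizes
    {A : Type*} [Fintype A] [Nonempty A]
    (w : A → ℝ) (hw : ∀ a, 0 ≤ w a) (hsum : ∑ a, w a = 1)
    (f : A → ℝ) (τ : ℝ) (hτ : τ ∈ Set.Ioo (0 : ℝ) 1) :
    (∃! m : ℝ, IsExpectile τ w f m) ∧
    (∀ m : ℝ, IsExpectile τ w f m →
      (∀ m' : ℝ,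
          (∑ a, w a * (|τ - (if f a - m < 0 then 1 else 0)| * (f a - m) ^ 2))
            ≤ ∑ a, w a * (|τ - (if f a - m' < 0 then 1 else 0)| * (f a - m') ^ 2)) ∧
      (∀ m' : ℝ,
          (∀ m'' : ℝ,
            (∑ a, w a * (|τ - (if f a - m' < 0 then 1 else 0)| * (f a - m') ^ 2))
              ≤ ∑ a, w a * (|τ - (if f a - m'' < 0 then 1 else 0)| * (f a - m'') ^ 2))
          → m' = m)) := by
  obtain ⟨h0, h1⟩ := hτ
  have hα : 0 < min τ (1 - τ) := lt_min h0 (by linarith)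
  -- existence via IVT
  set G : ℝ → ℝ := fun m => τ * ∑ a, w a * max (f a - m) 0
      - (1 - τ) * ∑ a, w a * max (m - f a) 0 with hG
  have hGcont : Continuous G := by
    apply Continuous.sub
    · exact continuous_const.mul (continuous_finset_sum _ fun a _ =>
        continuous_const.mul ((continuous_const.sub continuous_id).max continuous_const))
    · exact continuous_const.mul (continuous_finset_sum _ fun a _ =>
        continuous_const.mul ((continuous_id.sub continuous_const).max continuous_const))
  set a0 : ℝ := Finset.univ.inf' Finset.univ_nonempty f with ha0def
  set b0 : ℝ := Finset.univ.sup' Finset.univ_nonempty f with hb0def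
  have ha0 : ∀ x, a0 ≤ f x := fun x => Finset.inf'_le _ (mem_univ x)
  have hb0 : ∀ x, f x ≤ b0 := fun x => Finset.le_sup' _ (mem_univ x)
  have hab : a0 ≤ b0 := le_trans (ha0 (Classical.arbitrary A)) (hb0 _)
  have hGa : 0 ≤ G a0 := by
    have h2 : ∑ a, w a * max (a0 - f a) 0 = 0 :=
      Finset.sum_eq_zero fun a _ => by
        rw [max_eq_right (by linarith [ha0 a])]; ring
    have h3 : 0 ≤ ∑ a, w a * max (f a - a0) 0 :=
      Finset.sum_nonneg fun a _ => mul_nonneg (hw a) (le_max_right _ _)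
    simp only [hG, h2, mul_zero, sub_zero]
    exact mul_nonneg h0.le h3
  have hGb : G b0 ≤ 0 := by
    have h2 : ∑ a, w a * max (f a - b0) 0 = 0 :=
      Finset.sum_eq_zero fun a _ => by
        rw [max_eq_right (by linarith [hb0 a])]; ring
    have h3 : 0 ≤ ∑ a, w a * max (b0 - f a) 0 :=
      Finset.sum_nonneg fun a _ => mul_nonneg (hw a) (le_max_right _ _)
    simp only [hG, h2, mul_zero, zero_sub, neg_nonpos]
    exact mul_nonneg (by linarith) h3
  obtain ⟨m, -, hGm⟩ := intermediate_value_Icc' hab hGcont.continuousOn ⟨hGb, hGa⟩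
  have hmE : IsExpectile τ w f m := by
    have : G m = 0 := hGm
    simp only [hG] at this
    unfold IsExpectile
    linarith
  -- uniqueness from the key inequality
  have huniq : ∀ m₁ m₂, IsExpectile τ w f m₁ → IsExpectile τ w f m₂ → m₁ = m₂ := by
    intro m₁ m₂ h₁ h₂
    have k1 := expectile_key w hw hsum f τ ⟨h0, h1⟩ m₁ h₁ m₂
    have k2 := expectile_key w hw hsum f τ ⟨h0, h1⟩ m₂ h₂ m₁
    by_contra hne
    have hp : 0 < (m₁ - m₂) ^ 2 :=
      lt_of_le_of_ne (sq_nonneg _) (Ne.symm (pow_ne_zero 2 (sub_ne_zero.mpr hne)))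
    have h4 := mul_pos hα hp
    have h5 : 0 ≤ min τ (1 - τ) * (m₂ - m₁) ^ 2 := mul_nonneg hα.le (sq_nonneg _)
    linarith
  refine ⟨⟨m, hmE, fun m' hm' => huniq m' m hm' hmE⟩, ?_⟩
  intro m₀ hm₀
  constructor
  · intro m'
    have k := expectile_key w hw hsum f τ ⟨h0, h1⟩ m₀ hm₀ m'
    nlinarith [sq_nonneg (m₀ - m'), hα.le]
  · intro m' hmin
    have k := expectile_key w hw hsum f τ ⟨h0, h1⟩ m₀ hm₀ m'
    have k2 := hmin m₀
    by_contra hne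
    have hp : 0 < (m₀ - m') ^ 2 :=
      lt_of_le_of_ne (sq_nonneg _) (Ne.symm (pow_ne_zero 2 (sub_ne_zero.mpr (Ne.symm hne))))
    have h4 := mul_pos hα hp
    linarith
end

section
/- (Theorem 1) Consider a finite MDP with finite nonempty state set S, finite nonempty action set A, transition probabilities p : S × A × S → ℝ with p(s'|s,a) ≥ 0 and Σ_{s'} p(s'|s,a) = 1, reward r : S × A → ℝ, discount γ ∈ [0,1), and behavior policy μ : S × A → ℝ with μ(a|s) ≥ 0 and Σ_a μ(a|s) = 1. Let Q* : S × A → ℝ satisfy Q*(s,a) = r(s,a) + γ·Σ_{s'} p(s'|s,a)·max{Q*(s',a') : μ(a'|s') > 0}, and let V : (0,1) → (S → ℝ) assign to each τ ∈ (0,1) a τ-expectile value function V(τ). Then for every state s, V(τ)(s) tends to max{Q*(s,a) : μ(a|s) > 0} as τ tends to 1 from the left. -/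
open Finset Filter

/-- `V` is a `τ`-expectile value function for the finite MDP `(p, r, γ)` and behavior
policy `μ`. -/
def IsExpectileValueFn {S A : Type*} [Fintype S] [Fintype A]
    (p : S → A → S → ℝ) (r : S → A → ℝ) (γ : ℝ) (μ : S → A → ℝ)
    (τ : ℝ) (V : S → ℝ) : Prop :=
  ∀ s, IsExpectile τ (μ s) (fun a => r s a + γ * ∑ s', p s a s' * V s') (V s)

private lemma sum_pos_exists {A : Type*} [Fintype A] {w : A → ℝ}
    (hw : ∀ a, 0 ≤ w a) (hws : ∑ a, w a = 1) : ∃ a, 0 < w a := by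
  by_contra h
  push_neg at h
  have h0 : ∑ a, w a = 0 :=
    Finset.sum_eq_zero fun a _ => le_antisymm (h a) (hw a)
  rw [hws] at h0
  norm_num at h0

private lemma expectile_exists_le {A : Type*} [Fintype A] {τ : ℝ}
    (hτ : τ ∈ Set.Ioo (0:ℝ) 1) {w f : A → ℝ}
    (hw : ∀ a, 0 ≤ w a) (hws : ∑ a, w a = 1) {m : ℝ}
    (h : IsExpectile τ w f m) : ∃ a, 0 < w a ∧ m ≤ f a := by
  by_contra hc
  push_neg at hc
  have hS1 : ∑ a, w a * max (f a - m) 0 = 0 := by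
    apply Finset.sum_eq_zero
    intro a _
    rcases (hw a).eq_or_lt with h0 | h0
    · rw [← h0, zero_mul]
    · rw [max_eq_right (by linarith [hc a h0]), mul_zero]
  have hS2 : 0 < ∑ a, w a * max (m - f a) 0 := by
    obtain ⟨a, ha⟩ := sum_pos_exists hw hws
    refine Finset.sum_pos' (fun b _ => mul_nonneg (hw b) (le_max_right _ _))
      ⟨a, Finset.mem_univ a, ?_⟩
    have hfa := hc a ha
    exact mul_pos ha (lt_max_iff.mpr (Or.inl (by linarith)))
  rw [IsExpectile, hS1, mul_zero] at h
  nlinarith [mul_pos (by linarith [hτ.2] : (0:ℝ) < 1 - τ) hS2]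

private lemma expectile_exists_ge {A : Type*} [Fintype A] {τ : ℝ}
    (hτ : τ ∈ Set.Ioo (0:ℝ) 1) {w f : A → ℝ}
    (hw : ∀ a, 0 ≤ w a) (hws : ∑ a, w a = 1) {m : ℝ}
    (h : IsExpectile τ w f m) : ∃ a, 0 < w a ∧ f a ≤ m := by
  by_contra hc
  push_neg at hc
  have hS2 : ∑ a, w a * max (m - f a) 0 = 0 := by
    apply Finset.sum_eq_zero
    intro a _
    rcases (hw a).eq_or_lt with h0 | h0
    · rw [← h0, zero_mul]
    · rw [max_eq_right (by linarith [hc a h0]), mul_zero]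
  have hS1 : 0 < ∑ a, w a * max (f a - m) 0 := by
    obtain ⟨a, ha⟩ := sum_pos_exists hw hws
    refine Finset.sum_pos' (fun b _ => mul_nonneg (hw b) (le_max_right _ _))
      ⟨a, Finset.mem_univ a, ?_⟩
    have hfa := hc a ha
    exact mul_pos ha (lt_max_iff.mpr (Or.inl (by linarith)))
  rw [IsExpectile, hS2, mul_zero] at h
  nlinarith [mul_pos hτ.1 hS1]

private lemma expectile_quant {A : Type*} [Fintype A] {τ : ℝ}
    (hτ : τ ∈ Set.Ioo (0:ℝ) 1) {w f : A → ℝ}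
    (hw : ∀ a, 0 ≤ w a) (hws : ∑ a, w a = 1) {m C : ℝ}
    (h : IsExpectile τ w f m) (hC : ∀ a, max (m - f a) 0 ≤ C) (a₀ : A) :
    τ * w a₀ * (f a₀ - m) ≤ (1 - τ) * C := by
  have h1 : w a₀ * (f a₀ - m) ≤ ∑ a, w a * max (f a - m) 0 := by
    calc w a₀ * (f a₀ - m) ≤ w a₀ * max (f a₀ - m) 0 :=
          mul_le_mul_of_nonneg_left (le_max_left _ _) (hw a₀)
      _ ≤ ∑ a, w a * max (f a - m) 0 :=
          Finset.single_le_sum (f := fun a => w a * max (f a - m) 0)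
            (fun a _ => mul_nonneg (hw a) (le_max_right _ _)) (Finset.mem_univ a₀)
  have h2 : ∑ a, w a * max (m - f a) 0 ≤ C := by
    calc ∑ a, w a * max (m - f a) 0 ≤ ∑ a, w a * C :=
          Finset.sum_le_sum fun a _ => mul_le_mul_of_nonneg_left (hC a) (hw a)
      _ = C := by rw [← Finset.sum_mul, hws, one_mul]
  rw [IsExpectile] at h
  have h3 := mul_le_mul_of_nonneg_left h1 hτ.1.le
  have h4 := mul_le_mul_of_nonneg_left h2 (by linarith [hτ.2] : (0:ℝ) ≤ 1 - τ)
  nlinarith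

/-- Theorem 1: If `Q*` satisfies the support-constrained Bellman
optimality equation and `V τ` is a `τ`-expectile value function for each
`τ ∈ (0,1)`, then for every state `s`,
`V τ s → max{Q*(s,a) : μ(a|s) > 0}` as `τ → 1⁻`. -/
theorem expectile_value_function_tendsto_constrained_optimal
    {S A : Type*} [Fintype S] [Nonempty S] [Fintype A] [Nonempty A]
    (p : S → A → S → ℝ) (hp : ∀ s a s', 0 ≤ p s a s')
    (hps : ∀ s a, ∑ s', p s a s' = 1)
    (r : S → A → ℝ) (γ : ℝ) (hγ : γ ∈ Set.Ico (0 : ℝ) 1)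
    (μ : S → A → ℝ) (hμ : ∀ s a, 0 ≤ μ s a) (hμs : ∀ s, ∑ a, μ s a = 1)
    (Q : S → A → ℝ)
    (hQ : ∀ s a, Q s a
      = r s a + γ * ∑ s', p s a s' * sSup (Q s' '' {a' | 0 < μ s' a'}))
    (V : ℝ → S → ℝ)
    (hV : ∀ τ ∈ Set.Ioo (0 : ℝ) 1, IsExpectileValueFn p r γ μ τ (V τ)) :
    ∀ s, Tendsto (fun τ => V τ s) (nhdsWithin 1 (Set.Iio 1))
      (nhds (sSup (Q s '' {a | 0 < μ s a}))) := by
  obtain ⟨hγ0, hγ1⟩ := hγ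
  have hsupp : ∀ s : S, ∃ a, 0 < μ s a := fun s => sum_pos_exists (hμ s) (hμs s)
  obtain ⟨M, hMdef⟩ : ∃ M : S → ℝ, M = fun s => sSup (Q s '' {a | 0 < μ s a}) := ⟨_, rfl⟩
  have hMs : ∀ s, M s = sSup (Q s '' {a | 0 < μ s a}) := fun s => by rw [hMdef]
  have hMmem : ∀ s, ∃ a, 0 < μ s a ∧ Q s a = M s := by
    intro s
    have hne : (Q s '' {a | 0 < μ s a}).Nonempty := by
      obtain ⟨a, ha⟩ := hsupp s
      exact ⟨Q s a, a, ha, rfl⟩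
    obtain ⟨a, ha, hqa⟩ := hne.csSup_mem (Set.toFinite _)
    exact ⟨a, ha, by rw [hMs s]; exact hqa⟩
  have hMle : ∀ s a, 0 < μ s a → Q s a ≤ M s := by
    intro s a ha
    rw [hMs s]
    exact le_csSup (Set.Finite.bddAbove (Set.toFinite _)) ⟨a, ha, rfl⟩
  have hQM : ∀ s a, Q s a = r s a + γ * ∑ s', p s a s' * M s' := by
    intro s a
    rw [hQ s a]
    congr 2
    refine Finset.sum_congr rfl fun s' _ => ?_
    rw [hMs s']
  -- uniform bounds
  obtain ⟨R₀, hR₀⟩ := Finite.exists_le (fun sa : S × A => |r sa.1 sa.2|)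
  obtain ⟨R, hR0, hR⟩ : ∃ R : ℝ, 0 ≤ R ∧ ∀ s a, |r s a| ≤ R :=
    ⟨max R₀ 0, le_max_right _ _, fun s a => (hR₀ (s, a)).trans (le_max_left _ _)⟩
  obtain ⟨B, hB0, hRγB⟩ : ∃ B : ℝ, 0 ≤ B ∧ R + γ * B = B := by
    have hne : (1:ℝ) - γ ≠ 0 := by linarith
    refine ⟨R / (1 - γ), div_nonneg hR0 (by linarith), ?_⟩
    field_simp
    ring
  -- generic: weighted averages respect bounds
  have habs : ∀ (W : S → ℝ) (c : ℝ), (∀ s', |W s'| ≤ c) →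
      ∀ s a, |∑ s', p s a s' * W s'| ≤ c := by
    intro W c hc s a
    calc |∑ s', p s a s' * W s'| ≤ ∑ s', |p s a s' * W s'| :=
          Finset.abs_sum_le_sum_abs _ _
      _ ≤ ∑ s', p s a s' * c := by
          refine Finset.sum_le_sum fun s' _ => ?_
          rw [abs_mul, abs_of_nonneg (hp s a s')]
          exact mul_le_mul_of_nonneg_left (hc s') (hp s a s')
      _ = c := by rw [← Finset.sum_mul, hps s a, one_mul]
  -- bound on M
  have hMb : ∀ s, |M s| ≤ B := by
    obtain ⟨s, -, hs⟩ := Finset.exists_mem_eq_sup' (s := (Finset.univ : Finset S)) Finset.univ_nonempty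
      (fun s : S => |M s|)
    set NM := Finset.univ.sup' Finset.univ_nonempty (fun s : S => |M s|) with hNM
    have hle : ∀ s', |M s'| ≤ NM := by
      intro s'
      rw [hNM]
      exact Finset.le_sup' (fun s : S => |M s|) (Finset.mem_univ s')
    have hkey : NM ≤ B := by
      obtain ⟨a, ha, hQa⟩ := hMmem s
      have h1 := abs_le.1 (habs M NM hle s a)
      have hr := abs_le.1 (hR s a)
      have h2 : |Q s a| ≤ R + γ * NM := by
        rw [hQM s a, abs_le]
        constructor <;>
          nlinarith [mul_le_mul_of_nonneg_left h1.1 hγ0,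
            mul_le_mul_of_nonneg_left h1.2 hγ0]
      have h3 : NM ≤ R + γ * NM := by
        calc NM = |Q s a| := by rw [hs, hQa]
          _ ≤ R + γ * NM := h2
      nlinarith
    intro s'
    exact (hle s').trans hkey
  -- bound on V τ
  have hVb : ∀ τ ∈ Set.Ioo (0:ℝ) 1, ∀ s, |V τ s| ≤ B := by
    intro τ hτ
    obtain ⟨s, -, hs⟩ := Finset.exists_mem_eq_sup' (s := (Finset.univ : Finset S)) Finset.univ_nonempty
      (fun s : S => |V τ s|)
    set N := Finset.univ.sup' Finset.univ_nonempty (fun s : S => |V τ s|) with hNdef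
    have hle : ∀ s', |V τ s'| ≤ N := by
      intro s'
      rw [hNdef]
      exact Finset.le_sup' (fun s : S => |V τ s|) (Finset.mem_univ s')
    have hkey : N ≤ B := by
      obtain ⟨a₁, ha₁, hf₁⟩ := expectile_exists_le hτ (hμ s) (hμs s) (hV τ hτ s)
      obtain ⟨a₂, ha₂, hf₂⟩ := expectile_exists_ge hτ (hμ s) (hμs s) (hV τ hτ s)
      have h1 := abs_le.1 (habs (V τ) N hle s a₁)
      have h2 := abs_le.1 (habs (V τ) N hle s a₂)
      have hr1 := abs_le.1 (hR s a₁)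
      have hr2 := abs_le.1 (hR s a₂)
      have hVs : |V τ s| ≤ R + γ * N := by
        rw [abs_le]
        constructor
        · nlinarith [mul_le_mul_of_nonneg_left h2.1 hγ0]
        · nlinarith [mul_le_mul_of_nonneg_left h1.2 hγ0]
      have h3 : N ≤ R + γ * N := by
        calc N = |V τ s| := hs
          _ ≤ R + γ * N := hVs
      nlinarith
    intro s'
    exact (hle s').trans hkey
  -- minimal positive weight
  have hTne : (Finset.univ.filter (fun sa : S × A => 0 < μ sa.1 sa.2)).Nonempty := by
    obtain ⟨a, ha⟩ := hsupp (Classical.arbitrary S)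
    exact ⟨(Classical.arbitrary S, a), by simp [ha]⟩
  obtain ⟨wmin, hw0, hwle⟩ : ∃ w : ℝ, 0 < w ∧ ∀ s a, 0 < μ s a → w ≤ μ s a := by
    refine ⟨(Finset.univ.filter (fun sa : S × A => 0 < μ sa.1 sa.2)).inf' hTne
      (fun sa => μ sa.1 sa.2), ?_, ?_⟩
    · rw [Finset.lt_inf'_iff]
      intro sa hsa
      exact (Finset.mem_filter.1 hsa).2
    · intro s a ha
      exact Finset.inf'_le (fun sa : S × A => μ sa.1 sa.2)
        (Finset.mem_filter.2 ⟨Finset.mem_univ (s, a), ha⟩)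
  -- upper bound: V τ s ≤ M s
  have hUB : ∀ τ ∈ Set.Ioo (0:ℝ) 1, ∀ s, V τ s ≤ M s := by
    intro τ hτ
    obtain ⟨s, -, hs⟩ := Finset.exists_mem_eq_sup' (s := (Finset.univ : Finset S)) Finset.univ_nonempty
      (fun s : S => V τ s - M s)
    set E := Finset.univ.sup' Finset.univ_nonempty (fun s : S => V τ s - M s) with hEdef
    have hle : ∀ s', V τ s' - M s' ≤ E := by
      intro s'
      rw [hEdef]
      exact Finset.le_sup' (fun s : S => V τ s - M s) (Finset.mem_univ s')
    have hE0 : E ≤ 0 := by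
      obtain ⟨a₁, ha₁, hf₁⟩ := expectile_exists_le hτ (hμ s) (hμs s) (hV τ hτ s)
      have hsum : ∑ s', p s a₁ s' * V τ s' ≤ (∑ s', p s a₁ s' * M s') + E := by
        have h1 : ∑ s', p s a₁ s' * V τ s' ≤ ∑ s', p s a₁ s' * (M s' + E) :=
          Finset.sum_le_sum fun s' _ =>
            mul_le_mul_of_nonneg_left (by linarith [hle s']) (hp s a₁ s')
        have h2 : ∑ s', p s a₁ s' * (M s' + E)
            = (∑ s', p s a₁ s' * M s') + (∑ s', p s a₁ s') * E := by
          rw [Finset.sum_mul, ← Finset.sum_add_distrib]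
          exact Finset.sum_congr rfl fun s' _ => by ring
        rw [h2, hps s a₁, one_mul] at h1
        exact h1
      have hQle : Q s a₁ ≤ M s := hMle s a₁ ha₁
      have hq := hQM s a₁
      have hVle : V τ s ≤ M s + γ * E := by
        nlinarith [mul_le_mul_of_nonneg_left hsum hγ0]
      have hEγ : E ≤ γ * E := by linarith [hs, hVle]
      nlinarith
    intro s'
    linarith [hle s', hE0]
  -- lower bound with explicit rate
  have hLB : ∀ τ ∈ Set.Ioo (0:ℝ) 1, ∀ s,
      M s - V τ s ≤ (1 - τ) * (2 * B) / (τ * wmin * (1 - γ)) := by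
    intro τ hτ
    have hεpos : 0 < τ * wmin * (1 - γ) := by
      have h1 := hτ.1
      have h2 := hτ.2
      have : (0:ℝ) < 1 - γ := by linarith
      positivity
    obtain ⟨s, -, hs⟩ := Finset.exists_mem_eq_sup' (s := (Finset.univ : Finset S)) Finset.univ_nonempty
      (fun s : S => M s - V τ s)
    set D := Finset.univ.sup' Finset.univ_nonempty (fun s : S => M s - V τ s) with hDdef
    have hle : ∀ s', M s' - V τ s' ≤ D := by
      intro s'
      rw [hDdef]
      exact Finset.le_sup' (fun s : S => M s - V τ s) (Finset.mem_univ s')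
    have hD0 : 0 ≤ D := by
      have s0 := Classical.arbitrary S
      have := hUB τ hτ s0
      linarith [hle s0]
    suffices hkey : D ≤ (1 - τ) * (2 * B) / (τ * wmin * (1 - γ)) by
      intro s'
      exact (hle s').trans hkey
    obtain ⟨a, ha, hQa⟩ := hMmem s
    have hCb : ∀ b : A, max (V τ s - (r s b + γ * ∑ s', p s b s' * V τ s')) 0 ≤ 2 * B := by
      intro b
      have h1 := abs_le.1 (hVb τ hτ s)
      have h2 := abs_le.1 (habs (V τ) B (hVb τ hτ) s b)
      have hr := abs_le.1 (hR s b)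
      have hfb : -B ≤ r s b + γ * ∑ s', p s b s' * V τ s' := by
        nlinarith [mul_le_mul_of_nonneg_left h2.1 hγ0]
      rw [max_le_iff]
      exact ⟨by linarith, by linarith⟩
    have hquant := expectile_quant hτ (hμ s) (hμs s) (hV τ hτ s) hCb a
    -- f a ≥ M s - γ D
    have h1 : (∑ s', p s a s' * M s') - D ≤ ∑ s', p s a s' * V τ s' := by
      have hh : ∑ s', p s a s' * (M s' - D) ≤ ∑ s', p s a s' * V τ s' :=
        Finset.sum_le_sum fun s' _ =>
          mul_le_mul_of_nonneg_left (by linarith [hle s']) (hp s a s')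
      have h2 : ∑ s', p s a s' * (M s' - D)
          = (∑ s', p s a s' * M s') - (∑ s', p s a s') * D := by
        rw [Finset.sum_mul, ← Finset.sum_sub_distrib]
        exact Finset.sum_congr rfl fun s' _ => by ring
      rw [h2, hps s a, one_mul] at hh
      exact hh
    have hq := hQM s a
    have hfa : M s - γ * D ≤ r s a + γ * ∑ s', p s a s' * V τ s' := by
      nlinarith [mul_le_mul_of_nonneg_left h1 hγ0]
    have hDx : (1 - γ) * D ≤ (r s a + γ * ∑ s', p s a s' * V τ s') - V τ s := by
      have hDs : D = M s - V τ s := hs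
      linarith
    have hμa := hwle s a ha
    rw [le_div_iff₀ hεpos]
    rcases le_or_gt 0 ((r s a + γ * ∑ s', p s a s' * V τ s') - V τ s) with hx0 | hx0
    · have hh1 : τ * wmin * ((r s a + γ * ∑ s', p s a s' * V τ s') - V τ s)
          ≤ τ * μ s a * ((r s a + γ * ∑ s', p s a s' * V τ s') - V τ s) :=
        mul_le_mul_of_nonneg_right
          (mul_le_mul_of_nonneg_left hμa hτ.1.le) hx0
      have hh2 : τ * wmin * ((1 - γ) * D)
          ≤ τ * wmin * ((r s a + γ * ∑ s', p s a s' * V τ s') - V τ s) :=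
        mul_le_mul_of_nonneg_left hDx (mul_pos hτ.1 hw0).le
      nlinarith
    · nlinarith
  -- conclusion
  intro s0
  rw [← hMs s0]
  have hg : Tendsto (fun τ : ℝ => (1 - τ) * (2 * B) / (τ * wmin * (1 - γ)))
      (nhdsWithin 1 (Set.Iio 1)) (nhds 0) := by
    have hc : ContinuousAt (fun τ : ℝ => (1 - τ) * (2 * B) / (τ * wmin * (1 - γ))) 1 := by
      apply ContinuousAt.div
      · fun_prop
      · fun_prop
      · show (1:ℝ) * wmin * (1 - γ) ≠ 0
        have : (0:ℝ) < 1 * wmin * (1 - γ) := by nlinarith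
        exact this.ne'
    have h := hc.tendsto.mono_left (nhdsWithin_le_nhds :
      nhdsWithin (1:ℝ) (Set.Iio 1) ≤ nhds 1)
    simpa using h
  have hsub : Tendsto (fun τ => V τ s0 - M s0) (nhdsWithin 1 (Set.Iio 1)) (nhds 0) := by
    apply squeeze_zero_norm' _ hg
    filter_upwards [Ioo_mem_nhdsLT_of_mem (by norm_num : (1:ℝ) ∈ Set.Ioc 0 1)] with τ hτ
    rw [Real.norm_eq_abs, abs_le']
    have hεnn : (0:ℝ) ≤ (1 - τ) * (2 * B) / (τ * wmin * (1 - γ)) := by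
      apply div_nonneg
      · exact mul_nonneg (by linarith [hτ.2]) (by linarith [hB0])
      · exact le_of_lt (mul_pos (mul_pos hτ.1 hw0) (by linarith))
    constructor
    · linarith [hUB τ hτ s0]
    · linarith [hLB τ hτ s0]
  have h := hsub.add_const (M s0)
  simpa using h
end
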